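/- Let the n² edges of the complete bipartite graph K_{n,n} carry i.i.d. weights X_e distributed as a good random variable X, and let W_n = max over perfect matchings M of Σ_{e∈M} X_e. Then for every n ≥ 7, P(W_n > (1 + 1/n) · n · Λ*⁻¹(log n)) ≤ e^{−n}. -/

import Mathlib

open MeasureTheory ProbabilityTheory Real Filter

noncomputable section

-- Log-moment generating function `Λ`, valued in `EReal` (`⊤` when the exponential
-- moment is infinite).
open Classical in
def lmgf {Ω : Type*} [MeasurableSpace Ω] (μ : Measure Ω) (X : Ω → ℝ) (s : ℝ) : EReal :=
  if Integrable (fun ω => Real.exp (s * X ω)) μ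
  then ((Real.log (∫ ω, Real.exp (s * X ω) ∂μ) : ℝ) : EReal)
  else ⊤

/-- The Legendre transform `Λ*` of the log-moment generating function (rate function). -/
def rateFn {Ω : Type*} [MeasurableSpace Ω] (μ : Measure Ω) (X : Ω → ℝ) (t : ℝ) : EReal :=
  ⨆ s : ℝ, ((s * t : ℝ) : EReal) - lmgf μ X s

/-- The generalised inverse `Λ*⁻¹(t) = inf {s ≥ 0 : Λ*(s) ≥ t}`. -/
def rateFnInv {Ω : Type*} [MeasurableSpace Ω] (μ : Measure Ω) (X : Ω → ℝ) (t : ℝ) : ℝ :=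
  sInf {s : ℝ | 0 ≤ s ∧ (t : EReal) ≤ rateFn μ X s}

/-- `X` is symmetric: `-X` has the same distribution as `X`. -/
def SymmetricRV {Ω : Type*} [MeasurableSpace Ω] (μ : Measure Ω) (X : Ω → ℝ) : Prop :=
  Measure.map X μ = Measure.map (fun ω => -X ω) μ

/-- `Λ` is finite in a neighbourhood of `0`. -/
def FiniteLmgfNearZero {Ω : Type*} [MeasurableSpace Ω] (μ : Measure Ω) (X : Ω → ℝ) : Prop :=
  ∃ δ > (0:ℝ), ∀ s : ℝ, |s| < δ → lmgf μ X s ≠ ⊤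

/-- `X` has regular upper tails: `P(X > t) = exp(-(1+o(1)) Λ*(t))` as `t → ∞`
(vacuous at points where `Λ*(t) = ∞`). -/
def RegularUpperTails {Ω : Type*} [MeasurableSpace Ω] (μ : Measure Ω) (X : Ω → ℝ) : Prop :=
  ∀ ε > (0:ℝ), ∀ᶠ t in atTop, ∀ r : ℝ, rateFn μ X t = (r : EReal) →
    Real.exp (-(1+ε)*r) ≤ (μ {ω | t < X ω}).toReal ∧
    (μ {ω | t < X ω}).toReal ≤ Real.exp (-(1-ε)*r)

/-- A good random variable: symmetric, `Λ` finite near `0`, regular upper tails. -/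
def Good {Ω : Type*} [MeasurableSpace Ω] (μ : Measure Ω) (X : Ω → ℝ) : Prop :=
  SymmetricRV μ X ∧ FiniteLmgfNearZero μ X ∧ RegularUpperTails μ X

/-- The non-diagonal elements of `Sym2 (Fin n)`: the edges of the complete graph `K_n`. -/
abbrev EdgeT (n : ℕ) := {e : Sym2 (Fin n) // ¬ e.IsDiag}


/-- Total weight of a subgraph `G'` of `K_n` with edge weights `x`. -/
def graphWeight {n : ℕ} (x : EdgeT n → ℝ) (G' : SimpleGraph (Fin n)) : ℝ :=
  ∑ e : EdgeT n, Set.indicator {e' : EdgeT n | (e' : Sym2 (Fin n)) ∈ G'.edgeSet} x e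

/-- Total weight of the edges of a walk `p` with edge weights `x`. -/
def walkWeight {n : ℕ} (x : EdgeT n → ℝ) {u v : Fin n}
    (p : (⊤ : SimpleGraph (Fin n)).Walk u v) : ℝ :=
  ∑ e : EdgeT n, Set.indicator {e' : EdgeT n | (e' : Sym2 (Fin n)) ∈ p.edges} x e

end

/-!
A union bound over the `n!` perfect matchings and Chernoff's bound for a sum of `n` i.i.d. copies
of `X` give `P(W_n ≥ n u) ≤ n! e^{-n Λ*(u)}` for `u ≥ 0`. Put `t = Λ*⁻¹(log n)` and
`u = (1 + 1/n) t`. Since `Λ*` is convex with `Λ*(0) = 0` and `Λ* ≥ log n` on `(t, ∞)`, we get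
`Λ*(u) ≥ (1 + 1/n) log n`, so the bound is `n! / n^{n+1} ≤ e^{-n}`. This needs `t > 0`, which
holds unless `X ≤ 0` a.s.; in that case `W_n ≤ 0` a.s. and the event is null.
-/

open scoped Nat

lemma exp_one_le_one_add_inv_pow {n : ℕ} (hn : n ≠ 0) : exp 1 ≤ (1 + (n : ℝ)⁻¹) ^ (n + 1) := by
  have hn' : (0 : ℝ) < n := by positivity
  have hpos : 0 < 1 + (n : ℝ)⁻¹ := by positivity
  have hlog : 1 ≤ ((n + 1 : ℕ) : ℝ) * log (1 + (n : ℝ)⁻¹) := by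
    have h := one_sub_inv_le_log_of_pos hpos
    have h' : 1 - (1 + (n : ℝ)⁻¹)⁻¹ = ((n + 1 : ℕ) : ℝ)⁻¹ := by
      push_cast; field_simp; ring
    rw [h'] at h
    rwa [inv_le_iff_one_le_mul₀ (by positivity), mul_comm] at h
  calc exp 1 ≤ exp (((n + 1 : ℕ) : ℝ) * log (1 + (n : ℝ)⁻¹)) := exp_le_exp.2 hlog
    _ = (1 + (n : ℝ)⁻¹) ^ (n + 1) := by rw [exp_nat_mul, exp_log hpos]

lemma factorial_mul_exp_le_pow {n : ℕ} (hn : 7 ≤ n) : (n ! : ℝ) * exp n ≤ (n : ℝ) ^ (n + 1) := by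
  induction n, hn using Nat.le_induction with
  | base =>
    have he : exp 7 ≤ 2.7182818286 ^ 7 := by
      rw [show (7 : ℝ) = (7 : ℕ) * 1 by norm_num, exp_nat_mul]
      exact pow_le_pow_left₀ (exp_pos 1).le exp_one_lt_d9.le 7
    norm_num [Nat.factorial] at he ⊢
    linarith
  | succ n hn ih =>
    have hn' : (n : ℝ) ≠ 0 := by positivity
    calc ((n + 1) ! : ℝ) * exp ((n + 1 : ℕ) : ℝ) = (n + 1) * ((n ! : ℝ) * exp n) * exp 1 := by
          push_cast [Nat.factorial_succ]; rw [exp_add]; ring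
      _ ≤ (n + 1) * (n : ℝ) ^ (n + 1) * (1 + (n : ℝ)⁻¹) ^ (n + 1) := by
          gcongr
          exact exp_one_le_one_add_inv_pow (by omega)
      _ = ((n + 1 : ℕ) : ℝ) ^ (n + 1 + 1) := by
          rw [mul_assoc, ← mul_pow, mul_add, mul_inv_cancel₀ hn']; push_cast; ring

section RateFunction

variable {Ω : Type*} [MeasurableSpace Ω] {μ : Measure Ω} {ξ : Ω → ℝ}

lemma lmgf_of_integrable {s : ℝ} (h : Integrable (fun ω => exp (s * ξ ω)) μ) :
    lmgf μ ξ s = cgf ξ μ s := by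
  rw [lmgf, if_pos h]; rfl

lemma le_rateFn {s t : ℝ} (h : Integrable (fun ω => exp (s * ξ ω)) μ) :
    ((s * t - cgf ξ μ s : ℝ) : EReal) ≤ rateFn μ ξ t := by
  refine le_trans ?_ (le_iSup (fun s : ℝ => ((s * t : ℝ) : EReal) - lmgf μ ξ s) s)
  rw [lmgf_of_integrable h, EReal.coe_sub]

lemma rateFn_le {t : ℝ} {b : EReal}
    (h : ∀ s, Integrable (fun ω => exp (s * ξ ω)) μ → ((s * t - cgf ξ μ s : ℝ) : EReal) ≤ b) :
    rateFn μ ξ t ≤ b := by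
  refine iSup_le fun s => ?_
  by_cases hs : Integrable (fun ω => exp (s * ξ ω)) μ
  · rw [lmgf_of_integrable hs, ← EReal.coe_sub]
    exact h s hs
  · rw [lmgf, if_neg hs, EReal.sub_top]
    exact bot_le

lemma exists_lt_sub_cgf_of_lt_rateFn {r t : ℝ} (h : (r : EReal) < rateFn μ ξ t) :
    ∃ s, Integrable (fun ω => exp (s * ξ ω)) μ ∧ r < s * t - cgf ξ μ s := by
  by_contra! hr
  exact h.not_ge (rateFn_le fun s hs => EReal.coe_le_coe_iff.2 (hr s hs))

lemma rateFn_nonneg [IsProbabilityMeasure μ] (t : ℝ) : 0 ≤ rateFn μ ξ t := by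
  simpa [cgf_zero] using le_rateFn (μ := μ) (ξ := ξ) (s := 0) (t := t) (by simp)

lemma exists_le_rateFn (hfin : FiniteLmgfNearZero μ ξ) (L : ℝ) :
    ∃ t, 0 ≤ t ∧ (L : EReal) ≤ rateFn μ ξ t := by
  obtain ⟨δ, hδ, hlmgf⟩ := hfin
  have hs : Integrable (fun ω => exp (δ / 2 * ξ ω)) μ := by
    by_contra h
    exact hlmgf (δ / 2) (by rw [abs_of_pos (by positivity)]; linarith) (by rw [lmgf, if_neg h])
  refine ⟨max 0 ((L + cgf ξ μ (δ / 2)) / (δ / 2)), le_max_left _ _,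
    le_trans (EReal.coe_le_coe_iff.2 ?_) (le_rateFn hs)⟩
  have := mul_le_mul_of_nonneg_left (le_max_right 0 ((L + cgf ξ μ (δ / 2)) / (δ / 2)))
    (by positivity : (0 : ℝ) ≤ δ / 2)
  rw [mul_div_cancel₀ _ (by positivity)] at this
  linarith

variable [IsProbabilityMeasure μ]

lemma cgf_nonneg_of_symmetric (hξ : Measurable ξ) (hsym : SymmetricRV μ ξ) {s : ℝ}
    (h : Integrable (fun ω => exp (s * ξ ω)) μ) : 0 ≤ cgf ξ μ s := by
  have hid : IdentDistrib ξ (-ξ) μ μ := ⟨hξ.aemeasurable, hξ.neg.aemeasurable, hsym⟩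
  have hneg : Integrable (fun ω => exp (-s * ξ ω)) μ := by
    simpa [Function.comp_def] using (hid.comp (measurable_const_mul s).exp).integrable_iff.1 h
  have hmgf : mgf ξ μ s = mgf ξ μ (-s) := by
    rw [← mgf_neg]; exact mgf_congr_of_identDistrib _ _ hid s
  have htwo : 2 ≤ mgf ξ μ s + mgf ξ μ (-s) := by
    rw [mgf, mgf, ← integral_add h hneg]
    calc (2 : ℝ) = ∫ _, (2 : ℝ) ∂μ := by simp
      _ ≤ _ := integral_mono (integrable_const 2) (h.add hneg) fun ω => by
          have h₁ := add_one_le_exp (s * ξ ω)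
          have h₂ := add_one_le_exp (-s * ξ ω)
          simp only [Pi.add_apply]
          linarith
  exact log_nonneg (by linarith)

lemma rateFn_le_of_forall_nonneg (hξ : Measurable ξ) (hsym : SymmetricRV μ ξ) {t : ℝ}
    (ht : 0 ≤ t) {b : EReal} (hb : 0 ≤ b)
    (h : ∀ s, 0 ≤ s → Integrable (fun ω => exp (s * ξ ω)) μ →
      ((s * t - cgf ξ μ s : ℝ) : EReal) ≤ b) :
    rateFn μ ξ t ≤ b :=
  rateFn_le fun s hs => by
    rcases le_or_gt 0 s with hs0 | hs0
    · exact h s hs0 hs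
    · have := cgf_nonneg_of_symmetric hξ hsym hs
      exact le_trans (EReal.coe_nonpos.2 (by nlinarith)) hb

lemma rateFn_mono (hξ : Measurable ξ) (hsym : SymmetricRV μ ξ) {t t' : ℝ} (ht : 0 ≤ t)
    (htt' : t ≤ t') : rateFn μ ξ t ≤ rateFn μ ξ t' :=
  rateFn_le_of_forall_nonneg hξ hsym ht (rateFn_nonneg t') fun _ hs0 hs =>
    le_trans (EReal.coe_le_coe_iff.2 (by nlinarith)) (le_rateFn hs)

lemma rateFn_le_div_mul (hξ : Measurable ξ) (hsym : SymmetricRV μ ξ) {v u R : ℝ}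
    (hv : 0 ≤ v) (hvu : v ≤ u) (hu : 0 < u) (hR : rateFn μ ξ u ≤ R) :
    rateFn μ ξ v ≤ ((v / u * R : ℝ) : EReal) := by
  have hR0 : 0 ≤ R := EReal.coe_nonneg.1 ((rateFn_nonneg u).trans hR)
  refine rateFn_le_of_forall_nonneg hξ hsym hv (EReal.coe_nonneg.2 (by positivity))
    fun s _ hs => EReal.coe_le_coe_iff.2 ?_
  have hsu : s * u - cgf ξ μ s ≤ R := EReal.coe_le_coe_iff.1 ((le_rateFn hs).trans hR)
  have hcgf := cgf_nonneg_of_symmetric hξ hsym hs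
  have hθ : v / u ≤ 1 := (div_le_one hu).2 hvu
  calc s * v - cgf ξ μ s ≤ v / u * (s * u - cgf ξ μ s) := by
        rw [mul_sub, div_mul_eq_mul_div, mul_div_assoc, mul_div_cancel_right₀ _ hu.ne', mul_comm]
        nlinarith
    _ ≤ v / u * R := by gcongr

lemma rateFn_le_neg_log_measureReal (hξ : Measurable ξ) (hsym : SymmetricRV μ ξ) {c : ℝ}
    (hc : 0 ≤ c) (hp : 0 < μ.real {ω | c ≤ ξ ω}) :
    rateFn μ ξ c ≤ ((-log (μ.real {ω | c ≤ ξ ω}) : ℝ) : EReal) := by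
  refine rateFn_le_of_forall_nonneg hξ hsym hc
    (EReal.coe_nonneg.2 (neg_nonneg.2 (log_nonpos hp.le measureReal_le_one)))
    fun s hs0 hs => EReal.coe_le_coe_iff.2 ?_
  have := (log_le_iff_le_exp hp).2 (measure_ge_le_exp_cgf c hs0 hs)
  linarith

end RateFunction

section RateFunctionInverse

variable {Ω : Type*} [MeasurableSpace Ω] {μ : Measure Ω} [IsProbabilityMeasure μ] {ξ : Ω → ℝ}

lemma le_rateFn_of_rateFnInv_lt (hξ : Measurable ξ) (hsym : SymmetricRV μ ξ)
    (hfin : FiniteLmgfNearZero μ ξ) {L v : ℝ} (hv : rateFnInv μ ξ L < v) :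
    (L : EReal) ≤ rateFn μ ξ v := by
  obtain ⟨t, ⟨ht0, hLt⟩, htv⟩ := exists_lt_of_csInf_lt
    (exists_le_rateFn hfin L) hv
  exact hLt.trans (rateFn_mono hξ hsym ht0 htv.le)

lemma exists_pos_measureReal_le_of_measure_pos (h : μ {ω | 0 < ξ ω} ≠ 0) :
    ∃ c > 0, 0 < μ.real {ω | c ≤ ξ ω} := by
  by_contra! hc
  refine h (measure_mono_null (t := ⋃ k : ℕ, {ω | 1 / ((k : ℝ) + 1) ≤ ξ ω}) ?_
    (measure_iUnion_null fun k => ?_))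
  · intro ω hω
    obtain ⟨k, hk⟩ := exists_nat_one_div_lt (show (0 : ℝ) < ξ ω from hω)
    exact Set.mem_iUnion.2 ⟨k, hk.le⟩
  · exact (measureReal_eq_zero_iff).1 ((hc _ (by positivity)).antisymm measureReal_nonneg)

-- Near `0`, `Λ*` lies below its chord to a point `c > 0` where `Λ*(c) ≤ -log P(X ≥ c) < ∞`.
lemma rateFnInv_pos (hξ : Measurable ξ) (hsym : SymmetricRV μ ξ) (hfin : FiniteLmgfNearZero μ ξ)
    {L : ℝ} (hL : 0 < L) (hpos : μ {ω | 0 < ξ ω} ≠ 0) : 0 < rateFnInv μ ξ L := by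
  obtain ⟨c, hc, hp⟩ := exists_pos_measureReal_le_of_measure_pos hpos
  set B := -log (μ.real {ω | c ≤ ξ ω})
  have hB : 0 ≤ B := neg_nonneg.2 (log_nonpos hp.le measureReal_le_one)
  have hbound : min c (c * L / (B + 1)) ≤ rateFnInv μ ξ L := by
    refine le_csInf (exists_le_rateFn hfin L) ?_
    rintro t ⟨ht0, hLt⟩
    rcases le_or_gt c t with hct | htc
    · exact (min_le_left _ _).trans hct
    · have h := EReal.coe_le_coe_iff.1 (hLt.trans (rateFn_le_div_mul hξ hsym ht0 htc.le hc
        (rateFn_le_neg_log_measureReal hξ hsym hc.le hp)))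
      refine (min_le_right _ _).trans ?_
      rw [div_le_iff₀ (by positivity)]
      rw [div_mul_eq_mul_div, le_div_iff₀ hc] at h
      nlinarith
  exact lt_of_lt_of_le (lt_min hc (by positivity)) hbound

lemma mul_le_rateFn_mul_rateFnInv (hξ : Measurable ξ) (hsym : SymmetricRV μ ξ)
    (hfin : FiniteLmgfNearZero μ ξ) {L θ : ℝ} (hT : 0 < rateFnInv μ ξ L) (hθ : 1 < θ) :
    ((θ * L : ℝ) : EReal) ≤ rateFn μ ξ (θ * rateFnInv μ ξ L) := by
  set T := rateFnInv μ ξ L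
  set u := θ * T
  have hTu : T < u := lt_mul_of_one_lt_left hT hθ
  have hu : 0 < u := hT.trans hTu
  rcases eq_or_ne (rateFn μ ξ u) ⊤ with htop | htop
  · rw [htop]; exact le_top
  obtain ⟨R, hR⟩ : ∃ R : ℝ, rateFn μ ξ u = R :=
    ⟨_, (EReal.coe_toReal htop (ne_bot_of_le_ne_bot EReal.zero_ne_bot (rateFn_nonneg u))).symm⟩
  -- for `T < v < u`, `L ≤ Λ*(v) ≤ (v / u) R`; let `v ↓ T`
  have hLv : ∀ v ∈ Set.Ioo T u, L ≤ v / u * R := fun v hv => EReal.coe_le_coe_iff.1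
    ((le_rateFn_of_rateFnInv_lt hξ hsym hfin hv.1).trans
      (rateFn_le_div_mul hξ hsym (hT.trans hv.1).le hv.2.le hu hR.le))
  have hLT : L ≤ T / u * R :=
    ge_of_tendsto (((continuous_id.div_const u).mul_const R).tendsto T |>.mono_left
      nhdsWithin_le_nhds) (eventually_of_mem (Ioo_mem_nhdsGT hTu) hLv)
  rw [hR, EReal.coe_le_coe_iff]
  rw [div_mul_eq_mul_div, le_div_iff₀ hu] at hLT
  nlinarith

end RateFunctionInverse

section Matchings

variable {Ω : Type*} [MeasurableSpace Ω] {μ : Measure Ω} {ξ : Ω → ℝ}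

lemma measure_iSup_perm_sum_gt_eq_zero {n : ℕ} {X : Fin n × Fin n → Ω → ℝ}
    (hid : ∀ e, IdentDistrib (X e) ξ μ μ) (hξ0 : μ {ω | 0 < ξ ω} = 0) {a : ℝ} (ha : 0 ≤ a) :
    μ {ω | a < ⨆ σ : Equiv.Perm (Fin n), ∑ i, X (i, σ i) ω} = 0 := by
  refine measure_mono_null (t := ⋃ e, {ω | 0 < X e ω}) ?_ (measure_iUnion_null fun e => ?_)
  · intro ω hω
    by_contra hnot
    simp only [Set.mem_iUnion, not_exists] at hnot
    exact hω.not_ge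
      ((ciSup_le fun σ => Finset.sum_nonpos fun i _ => not_lt.1 (hnot _)).trans ha)
  · exact ((hid e).measure_mem_eq measurableSet_Ioi).trans hξ0

variable [IsProbabilityMeasure μ]

lemma measureReal_sum_ge_le_exp_cgf {n : ℕ} {Y : Fin n → Ω → ℝ} (hmeas : ∀ i, Measurable (Y i))
    (hind : iIndepFun Y μ) (hid : ∀ i, IdentDistrib (Y i) ξ μ μ) {s u : ℝ} (hs0 : 0 ≤ s)
    (hs : Integrable (fun ω => exp (s * ξ ω)) μ) :
    μ.real {ω | n * u ≤ ∑ i, Y i ω} ≤ exp (-(n * (s * u - cgf ξ μ s))) := by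
  have hY : ∀ i ∈ Finset.univ, Integrable (fun ω => exp (s * Y i ω)) μ := fun i _ =>
    ((hid i).comp (measurable_const_mul s).exp).integrable_iff.2 hs
  have hcgf : cgf (∑ i, Y i) μ s = n * cgf ξ μ s := by
    rw [hind.cgf_sum hmeas hY]
    simp only [cgf, mgf_congr_of_identDistrib _ _ (hid _) s, Finset.sum_const, Finset.card_univ,
      Fintype.card_fin, nsmul_eq_mul]
  have h := measure_ge_le_exp_cgf (n * u) hs0 (hind.integrable_exp_mul_sum hmeas hY)
  simp only [Finset.sum_apply, hcgf] at h
  convert h using 2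
  ring

lemma measureReal_sum_ge_le_exp_neg_rateFn (hξ : Measurable ξ) (hsym : SymmetricRV μ ξ) {n : ℕ}
    {Y : Fin n → Ω → ℝ} (hmeas : ∀ i, Measurable (Y i)) (hind : iIndepFun Y μ)
    (hid : ∀ i, IdentDistrib (Y i) ξ μ μ) {u r : ℝ} (hu : 0 ≤ u)
    (hr : (r : EReal) ≤ rateFn μ ξ u) :
    μ.real {ω | n * u ≤ ∑ i, Y i ω} ≤ exp (-(n * r)) := by
  have hlt : ∀ r' < r, μ.real {ω | n * u ≤ ∑ i, Y i ω} ≤ exp (-(n * r')) := by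
    intro r' hr'
    rcases le_or_gt r' 0 with hr'0 | hr'0
    · exact measureReal_le_one.trans (one_le_exp (by nlinarith [(n.cast_nonneg : (0 : ℝ) ≤ n)]))
    obtain ⟨s, hs, hsr⟩ := exists_lt_sub_cgf_of_lt_rateFn ((EReal.coe_lt_coe_iff.2 hr').trans_le hr)
    have hs0 : 0 ≤ s := by
      by_contra! hs0
      nlinarith [cgf_nonneg_of_symmetric hξ hsym hs]
    refine (measureReal_sum_ge_le_exp_cgf hmeas hind hid hs0 hs).trans (exp_le_exp.2 ?_)
    nlinarith [(n.cast_nonneg : (0 : ℝ) ≤ n)]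
  exact ge_of_tendsto ((by fun_prop : Continuous fun x : ℝ => exp (-(n * x))).tendsto r
    |>.mono_left nhdsWithin_le_nhds) (eventually_nhdsWithin_of_forall (s := Set.Iio r) hlt)

lemma measure_iSup_perm_sum_gt_le (hξ : Measurable ξ) (hsym : SymmetricRV μ ξ) {n : ℕ}
    {X : Fin n × Fin n → Ω → ℝ} (hmeas : ∀ e, Measurable (X e)) (hind : iIndepFun X μ)
    (hid : ∀ e, IdentDistrib (X e) ξ μ μ) {u r : ℝ} (hu : 0 ≤ u)
    (hr : (r : EReal) ≤ rateFn μ ξ u) :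
    μ {ω | n * u < ⨆ σ : Equiv.Perm (Fin n), ∑ i, X (i, σ i) ω} ≤
      ENNReal.ofReal (n ! * exp (-(n * r))) := by
  have hσ (σ : Equiv.Perm (Fin n)) :
      μ {ω | n * u ≤ ∑ i, X (i, σ i) ω} ≤ ENNReal.ofReal (exp (-(n * r))) := by
    rw [← ofReal_measureReal]
    exact ENNReal.ofReal_le_ofReal <| measureReal_sum_ge_le_exp_neg_rateFn hξ hsym
      (fun i => hmeas _) (hind.precomp fun i j h => (Prod.ext_iff.1 h).1) (fun i => hid _) hu hr
  calc μ {ω | n * u < ⨆ σ : Equiv.Perm (Fin n), ∑ i, X (i, σ i) ω}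
      ≤ μ (⋃ σ : Equiv.Perm (Fin n), {ω | n * u ≤ ∑ i, X (i, σ i) ω}) :=
        measure_mono fun ω hω => by
          obtain ⟨σ, hσ⟩ := exists_lt_of_lt_ciSup (show (n : ℝ) * u < _ from hω)
          exact Set.mem_iUnion.2 ⟨σ, hσ.le⟩
    _ ≤ ∑ σ : Equiv.Perm (Fin n), μ {ω | n * u ≤ ∑ i, X (i, σ i) ω} :=
        measure_iUnion_fintype_le _ _
    _ ≤ ∑ _σ : Equiv.Perm (Fin n), ENNReal.ofReal (exp (-(n * r))) :=
        Finset.sum_le_sum fun σ _ => hσ σ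
    _ = ENNReal.ofReal (n ! * exp (-(n * r))) := by
        rw [Finset.sum_const, Finset.card_univ, Fintype.card_perm, Fintype.card_fin, nsmul_eq_mul,
          ENNReal.ofReal_mul (by positivity), ENNReal.ofReal_natCast]

end Matchings

/-- with i.i.d. good edge weights on `K_{n,n}`, the maximal weight `W_n` of a
perfect matching satisfies, for every `n ≥ 7`,
`P(W_n > (1 + 1/n) n Λ*⁻¹(log n)) ≤ e^{-n}`. -/
theorem assignment_upper_bound {Ω : Type*} [MeasurableSpace Ω] (μ : Measure Ω)
    [IsProbabilityMeasure μ] (ξ : Ω → ℝ) (hξ : Measurable ξ) (hgood : Good μ ξ)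
    (n : ℕ) (hn : 7 ≤ n)
    (X : Fin n × Fin n → Ω → ℝ) (hmeas : ∀ e, Measurable (X e))
    (hind : iIndepFun X μ)
    (hid : ∀ e, IdentDistrib (X e) ξ μ μ) :
    μ {ω | (1 + 1 / (n : ℝ)) * n * rateFnInv μ ξ (Real.log n) <
        ⨆ σ : Equiv.Perm (Fin n), ∑ i, X (i, σ i) ω} ≤
      ENNReal.ofReal (Real.exp (-(n : ℝ))) := by
  obtain ⟨hsym, hfin, -⟩ := hgood
  have hn0 : (0 : ℝ) < n := by positivity
  have hL : 0 < log n := log_pos (by exact_mod_cast (by omega : 1 < n))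
  set T := rateFnInv μ ξ (log n)
  rw [show (1 + 1 / (n : ℝ)) * n * T = n * ((1 + 1 / n) * T) by ring]
  rcases eq_or_ne (μ {ω | 0 < ξ ω}) 0 with hξ0 | hξ0
  · have hT : 0 ≤ T := Real.sInf_nonneg fun _ h => h.1
    rw [measure_iSup_perm_sum_gt_eq_zero hid hξ0 (by positivity)]
    exact bot_le
  have hT : 0 < T := rateFnInv_pos hξ hsym hfin hL hξ0
  refine (measure_iSup_perm_sum_gt_le hξ hsym hmeas hind hid (by positivity)
    (mul_le_rateFn_mul_rateFnInv hξ hsym hfin hT (lt_add_of_pos_right 1 (by positivity)))).trans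
    (ENNReal.ofReal_le_ofReal ?_)
  have hpow : exp (-(n * ((1 + 1 / n) * log n))) = ((n : ℝ) ^ (n + 1))⁻¹ := by
    rw [show (n : ℝ) * ((1 + 1 / n) * log n) = ((n + 1 : ℕ) : ℝ) * log n by push_cast; field_simp,
      exp_neg, exp_nat_mul, exp_log hn0]
  rw [hpow, exp_neg, ← div_eq_mul_inv, div_le_iff₀ (by positivity), ← div_eq_inv_mul,
    le_div_iff₀ (exp_pos _)]
  exact factorial_mul_exp_le_pow hn
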